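/- For each n ≥ 2, the theory T of the generic n-uniform hypergraph has distality rank exactly n: T is n-distal but not (n-1)-distal. -/

import Mathlib

open FirstOrder Language Set

namespace DR

/-- A partial type over `M` in variables indexed by `β`: a set of formulas, each with
finitely many parameters from `M`. -/
abbrev PType (L : FirstOrder.Language) (M : Type) (β : Type) : Type _ :=
  Set ((k : ℕ) × (L.Formula (β ⊕ Fin k) × (Fin k → M)))

variable {M : Type}

/-- Two `β`-tuples have the same type over the parameter set `A`. -/
def EqTp (L : FirstOrder.Language) [L.Structure M] (A : Set M) {β : Type} (f g : β → M) : Prop :=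
  ∀ (k : ℕ) (a : Fin k → M), (∀ i, a i ∈ A) →
    ∀ φ : L.Formula (β ⊕ Fin k), φ.Realize (Sum.elim f a) ↔ φ.Realize (Sum.elim g a)

/-- All parameters of formulas in `p` lie in `D`. -/
def paramsIn {L : FirstOrder.Language} {β : Type} (D : Set M) (p : PType L M β) : Prop :=
  ∀ x ∈ p, ∀ i, x.2.2 i ∈ D

/-- The set of parameters appearing in `p`. -/
def paramSet {L : FirstOrder.Language} {β : Type} (p : PType L M β) : Set M :=
  ⋃ x ∈ p, Set.range x.2.2

/-- The tuple `f` realizes every formula of `p`. -/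
def realizes {L : FirstOrder.Language} [L.Structure M] {β : Type} (f : β → M)
    (p : PType L M β) : Prop :=
  ∀ x ∈ p, x.2.1.Realize (Sum.elim f x.2.2)

/-- `p` is finitely satisfiable by tuples with coordinates in `A`. -/
def finSatIn (L : FirstOrder.Language) [L.Structure M] (A : Set M) {β : Type}
    (p : PType L M β) : Prop :=
  ∀ s : Finset ((k : ℕ) × (L.Formula (β ⊕ Fin k) × (Fin k → M))), ↑s ⊆ p →
    ∃ f : β → M, (∀ i, f i ∈ A) ∧ ∀ x ∈ s, x.2.1.Realize (Sum.elim f x.2.2)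

/-- `p` is a complete (consistent) type over the parameter set `D`. -/
def isCompleteOver (L : FirstOrder.Language) [L.Structure M] (D : Set M) {β : Type}
    (p : PType L M β) : Prop :=
  paramsIn D p ∧ finSatIn L Set.univ p ∧
    ∀ (k : ℕ) (φ : L.Formula (β ⊕ Fin k)) (d : Fin k → M), (∀ i, d i ∈ D) →
      (⟨k, φ, d⟩ ∈ p ∨ ⟨k, φ.not, d⟩ ∈ p)

/-- `p` (a type with parameters in `D`) is invariant over `A`: membership of a formula depends
only on the type over `A` of its parameter tuple. -/
def invariantOver (L : FirstOrder.Language) [L.Structure M] (A D : Set M) {β : Type}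
    (p : PType L M β) : Prop :=
  ∀ (k : ℕ) (φ : L.Formula (β ⊕ Fin k)) (d d' : Fin k → M), (∀ i, d' i ∈ D) →
    EqTp L A d d' → ⟨k, φ, d⟩ ∈ p → ⟨k, φ, d'⟩ ∈ p

/-- The restriction of `p` to formulas with parameters in `S`. -/
def restrictParams {L : FirstOrder.Language} {β : Type} (S : Set M) (p : PType L M β) :
    PType L M β :=
  {x ∈ p | ∀ i, x.2.2 i ∈ S}

/-- `S` is `κ⁺`-saturated (realizes consistent types over parameter sets of size `≤ κ`). -/
def satIn (L : FirstOrder.Language) [L.Structure M] (S : Set M) (κ : Cardinal) : Prop :=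
  ∀ (n : ℕ) (p : PType L M (Fin n)), paramsIn S p → Cardinal.mk ↥(paramSet p) ≤ κ →
    finSatIn L Set.univ p → ∃ f : Fin n → M, (∀ i, f i ∈ S) ∧ realizes f p

/-- Saturation of the whole structure below the cardinal `κ` (in all small variable contexts). -/
def SatAll (L : FirstOrder.Language) (M : Type) [L.Structure M] (κ : Cardinal) : Prop :=
  ∀ (β : Type) (p : PType L M β), Cardinal.mk β < κ → Cardinal.mk ↥(paramSet p) < κ →
    finSatIn L Set.univ p → ∃ f : β → M, realizes f p

/-- `M` is a monster model: saturated in its own cardinality. -/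
def IsMonster (L : FirstOrder.Language) (M : Type) [L.Structure M] : Prop :=
  SatAll L M (Cardinal.mk M)

/-- The restriction of an `n`-type in tuple-variables to the sub-tuple of variables
selected by `σ`. -/
def restrictVars {L : FirstOrder.Language} {α : Type} {m n : ℕ} (σ : Fin m → Fin n)
    (p : PType L M (Fin n × α)) : PType L M (Fin m × α) :=
  {x | ⟨x.1, x.2.1.relabel (Sum.map (Prod.map σ id) id), x.2.2⟩ ∈ p}

/-- An `n`-type over `D` is `m`-determined if it is completely determined by the `m`-types
it contains among its variables. -/
def mDetermined (L : FirstOrder.Language) [L.Structure M] {α : Type} {n : ℕ} (m : ℕ)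
    (D : Set M) (p : PType L M (Fin n × α)) : Prop :=
  ∀ q : PType L M (Fin n × α), isCompleteOver L D q →
    (∀ σ : Fin m → Fin n, StrictMono σ → restrictVars σ q = restrictVars σ p) → q = p

/-- Flatten a finite tuple of `α`-tuples into a single tuple. -/
def tupcat {α : Type} {N : ℕ} (c : Fin N → α → M) : Fin N × α → M := fun x => c x.1 x.2

/-- The sequence `b` of `α`-tuples is indiscernible over `A`. -/
def indiscOver (L : FirstOrder.Language) [L.Structure M] (A : Set M) {ι α : Type}
    [LinearOrder ι] (b : ι → α → M) : Prop :=
  ∀ (N : ℕ) (f g : Fin N → ι), StrictMono f → StrictMono g →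
    EqTp L A (tupcat fun j => b (f j)) (tupcat fun j => b (g j))

/-- `T = Th(M)` is NIP: every formula has finite alternation rank on every
indiscernible sequence. -/
def IsNIP (L : FirstOrder.Language) (M : Type) [L.Structure M] : Prop :=
  ∀ (β ι : Type) [LinearOrder ι] (b : ι → β → M), indiscOver L ∅ b →
    ∀ (k : ℕ) (φ : L.Formula (β ⊕ Fin k)) (d : Fin k → M),
      ∃ N : ℕ, ∀ f : Fin (N + 1) → ι, StrictMono f →
        ∃ j : Fin N,
          (φ.Realize (Sum.elim (b (f j.castSucc)) d) ↔ φ.Realize (Sum.elim (b (f j.succ)) d))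

/-- The (global) limit type of a sequence: formulas eventually satisfied along the sequence. -/
def limTp (L : FirstOrder.Language) [L.Structure M] {ι : Type} [LinearOrder ι] (b : ι → M) :
    PType L M (Fin 1) :=
  {x | ∃ i₀ : ι, ∀ i ≥ i₀, x.2.1.Realize (Sum.elim (fun _ : Fin 1 => b i) x.2.2)}

/-- The product `p₀ ⊗ ⋯ ⊗ p_{n-1}` (resolved left to right) of global types invariant
over `A`, in singleton variables. -/
def nProd (L : FirstOrder.Language) [L.Structure M] (A : Set M) :
    (n : ℕ) → (Fin n → PType L M (Fin 1)) → PType L M (Fin n)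
  | 0, _ => {x | x.2.1.Realize (Sum.elim (fun v : Fin 0 => v.elim0) x.2.2)}
  | n + 1, ps =>
    {x | ∀ a : M,
      realizes (fun _ : Fin 1 => a) (restrictParams (A ∪ Set.range x.2.2) (ps 0)) →
      ⟨x.1 + 1,
        x.2.1.relabel (Sum.elim
          (fun v : Fin (n + 1) =>
            (Fin.cases (Sum.inr (Fin.last x.1)) (fun i => Sum.inl i) v : Fin n ⊕ Fin (x.1 + 1)))
          (fun j : Fin x.1 => Sum.inr j.castSucc)),
        Fin.snoc x.2.2 a⟩ ∈ nProd L A n (fun i => ps i.succ)}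

/-- `c` is (the left part of) a Dedekind cut: a nonempty proper lower set with no maximum,
whose complement has no minimum. -/
def IsDedekindCut {ι : Type} [LinearOrder ι] (c : Set ι) : Prop :=
  c.Nonempty ∧ cᶜ.Nonempty ∧ (∀ i ∈ c, ∀ j, j ≤ i → j ∈ c) ∧
    (∀ i ∈ c, ∃ j ∈ c, i < j) ∧ (∀ i ∈ cᶜ, ∃ j ∈ cᶜ, j < i)

/-- The strict order on the index extended by points inserted at the cuts `Lc`. -/
def insLT {ι η : Type} [LinearOrder ι] [LinearOrder η] (Lc : η → Set ι) :
    (ι ⊕ η) → (ι ⊕ η) → Prop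
  | Sum.inl i, Sum.inl j => i < j
  | Sum.inl i, Sum.inr e => i ∈ Lc e
  | Sum.inr e, Sum.inl i => i ∉ Lc e
  | Sum.inr e, Sum.inr e' => Lc e ⊂ Lc e' ∨ (Lc e = Lc e' ∧ e < e')

/-- The sequence `b` remains indiscernible over `A` after inserting the tuples `a e` for
`e ∈ S`, each at the cut `Lc e`. -/
def InsertsInd (L : FirstOrder.Language) [L.Structure M] (A : Set M) {ι η α : Type}
    [LinearOrder ι] [LinearOrder η] (b : ι → α → M) (Lc : η → Set ι) (a : η → α → M)
    (S : Set η) : Prop :=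
  ∀ (N : ℕ) (f g : Fin N → ι ⊕ η),
    (∀ x y : Fin N, x < y → insLT Lc (f x) (f y)) →
    (∀ x y : Fin N, x < y → insLT Lc (g x) (g y)) →
    (∀ x e, f x = Sum.inr e → e ∈ S) → (∀ x e, g x = Sum.inr e → e ∈ S) →
    EqTp L A (tupcat fun j => Sum.elim b a (f j)) (tupcat fun j => Sum.elim b a (g j))

/-- The left part of the `t`-th cut of the partition `part`. -/
def cutSet {ι : Type} [LinearOrder ι] {n : ℕ} (part : ι → Fin (n + 1)) (t : Fin n) : Set ι :=
  {i | part i ≤ t.castSucc}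

/-- `part` is a Dedekind partition: a monotone surjection onto `Fin (n+1)` all of whose
`n` cuts are Dedekind. -/
def IsDedekindPartition {ι : Type} [LinearOrder ι] {n : ℕ} (part : ι → Fin (n + 1)) : Prop :=
  Monotone part ∧ (∀ t, ∃ i, part i = t) ∧ ∀ t : Fin n, IsDedekindCut (cutSet part t)

/-- The Dedekind partition `part` of the sequence `b` (indiscernible over `A`) is `m`-distal:
if every `m`-element subset of `(a 0, …, a (n-1))` inserts indiscernibly over `A` at the cuts,
then the whole tuple inserts. -/
def MDistalPartition (L : FirstOrder.Language) [L.Structure M] (A : Set M) {ι α : Type}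
    [LinearOrder ι] {n : ℕ} (b : ι → α → M) (part : ι → Fin (n + 1)) (m : ℕ) : Prop :=
  ∀ a : Fin n → α → M,
    (∀ S : Set (Fin n), S.ncard = m → InsertsInd L A b (cutSet part) a S) →
    InsertsInd L A b (cutSet part) a Set.univ

/-- The limit type `lim(c₀, …, c_{n-1})` of the cuts of the partition `part`, as a type
in `n` tuple-variables: formulas satisfied by all tuples close enough to the cuts. -/
def limCutTp (L : FirstOrder.Language) [L.Structure M] {ι α : Type} [LinearOrder ι] {n : ℕ}
    (b : ι → α → M) (part : ι → Fin (n + 1)) : PType L M (Fin n × α) :=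
  {x | ∃ lo hi : Fin n → ι,
    (∀ t, lo t ∈ cutSet part t) ∧ (∀ t, hi t ∉ cutSet part t) ∧
    ∀ it : Fin n → ι, (∀ t, lo t < it t ∧ it t < hi t) →
      x.2.1.Realize (Sum.elim (fun v => b (it v.1) v.2) x.2.2)}

/-- Two sequences have the same EM-type (over `∅`). -/
def SameEM (L : FirstOrder.Language) [L.Structure M] {ι κι α : Type} [LinearOrder ι]
    [LinearOrder κι] (b : ι → α → M) (c : κι → α → M) : Prop :=
  ∀ (N : ℕ) (f : Fin N → ι) (g : Fin N → κι), StrictMono f → StrictMono g →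
    EqTp L ∅ (tupcat fun j => b (f j)) (tupcat fun j => c (g j))

/-- The complete EM-type of the indiscernible sequence `b` is `(n, m)`-distal: every Dedekind
partition with `n` cuts of every sequence with the same EM-type is `m`-distal. -/
def EMdistalNM (L : FirstOrder.Language) [L.Structure M] {ι α : Type} [LinearOrder ι]
    (b : ι → α → M) (n m : ℕ) : Prop :=
  ∀ (κι : Type) [LinearOrder κι] (c : κι → α → M), SameEM L b c →
    ∀ part : κι → Fin (n + 1), IsDedekindPartition part → MDistalPartition L ∅ c part m

/-- The index of an `(m+1)`-skeleton: `ω + (ω* + ω) + ⋯ + (ω* + ω) + ω*` with `m` middle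
pieces of type `ω* + ω ≅ ℤ`. -/
abbrev SkelIdx (m : ℕ) : Type := (ℕ ⊕ₗ Lex (Fin m × ℤ)) ⊕ₗ ℕᵒᵈ

/-- The canonical partition of the skeleton index into its `m + 2` pieces. -/
def skelPart (m : ℕ) : SkelIdx m → Fin (m + 2) := fun x =>
  match ofLex x with
  | Sum.inl y =>
    match ofLex y with
    | Sum.inl _ => 0
    | Sum.inr tz => ((ofLex tz).1.succ).castSucc
  | Sum.inr _ => Fin.last (m + 1)

/-- The theory of `M`, with parameters for `A` named, is `m`-distal: every Dedekind
partition with `m + 1` cuts of every sequence indiscernible over `A` is `m`-distal over `A`. -/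
def TheoryMDistalOver (L : FirstOrder.Language) (M : Type) [L.Structure M] (A : Set M)
    (m : ℕ) : Prop :=
  ∀ (ι α : Type) [LinearOrder ι] (b : ι → α → M), indiscOver L A b →
    ∀ part : ι → Fin (m + 2), IsDedekindPartition part → MDistalPartition L A b part m

/-- `T = Th(M)` is stable: every indiscernible sequence is totally indiscernible. -/
def TotallyIndisc (L : FirstOrder.Language) (M : Type) [L.Structure M] : Prop :=
  ∀ (ι α : Type) [LinearOrder ι] (b : ι → α → M), indiscOver L ∅ b →
    ∀ (N : ℕ) (f g : Fin N → ι), Function.Injective f → Function.Injective g →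
      EqTp L ∅ (tupcat fun j => b (f j)) (tupcat fun j => b (g j))

/-- `T = Th(M)` is strongly `1`-distal. -/
def StronglyOneDistal (L : FirstOrder.Language) (M : Type) [L.Structure M] : Prop :=
  ∀ (ι α : Type) [LinearOrder ι] (b : ι → α → M) (c : Set ι), IsDedekindCut c →
    ∀ (D : Set M) (a : α → M), indiscOver L D b →
      InsertsInd L ∅ b (fun _ : PUnit => c) (fun _ => a) Set.univ →
      InsertsInd L D b (fun _ : PUnit => c) (fun _ => a) Set.univ

/-- The language with a single `n`-ary relation symbol. -/
def hyperLang (n : ℕ) : FirstOrder.Language where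
  Functions := fun _ => Empty
  Relations := fun k => PLift (k = n)

/-- The edge relation of a `hyperLang n`-structure. -/
def Edge {n : ℕ} {M : Type} [S : (hyperLang n).Structure M] (v : Fin n → M) : Prop :=
  Structure.RelMap (L := hyperLang n) (⟨rfl⟩ : (hyperLang n).Relations n) v

/-- `M` is a generic `(n+2)`-uniform hypergraph: an infinite `(n+2)`-uniform hypergraph
satisfying all extension axioms `φ_{s,t}`. -/
def IsGenericHypergraph (n : ℕ) (M : Type) [S : (hyperLang (n + 2)).Structure M] : Prop :=
  Infinite M ∧
  (∀ (v : Fin (n + 2) → M) (σ : Equiv.Perm (Fin (n + 2))), Edge v → Edge (v ∘ σ)) ∧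
  (∀ v : Fin (n + 2) → M, Edge v → Function.Injective v) ∧
  ∀ (s t : ℕ) (A : Fin s → Fin (n + 1) → M) (B : Fin t → Fin (n + 1) → M),
    (∀ i, Function.Injective (A i)) → (∀ j, Function.Injective (B j)) →
    (∀ i j, i ≠ j → Set.range (A i) ≠ Set.range (A j)) →
    (∀ i j, i ≠ j → Set.range (B i) ≠ Set.range (B j)) →
    (∀ i j, Set.range (A i) ≠ Set.range (B j)) →
    ∃ x : M, (∀ i, Edge (Fin.snoc (A i) x)) ∧ ∀ j, ¬ Edge (Fin.snoc (B j) x)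

variable {M : Type}

/-- The unique `A`-invariant global extension of a type `q` over the saturated model `S`. -/
def globExtT (L : FirstOrder.Language) [L.Structure M] (A S : Set M) {β : Type}
    (q : PType L M β) : PType L M β :=
  {x | ∀ d' : Fin x.1 → M, (∀ i, d' i ∈ S) → EqTp L A x.2.2 d' → ⟨x.1, x.2.1, d'⟩ ∈ q}

/-- The product `p ⊗ q` (resolved left to right) of a type `p` with an `A`-invariant type `q`
over the saturated model `S`: `φ(x, y, d) ∈ p ⊗ q` iff for every `a` realizing the restriction
of `p` to `A ∪ d`, the formula `φ(a, y, d)` lies in the `A`-invariant global extension of `q`. -/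
def prodT (L : FirstOrder.Language) [L.Structure M] (A S : Set M) {na nb : ℕ}
    (p : PType L M (Fin na)) (q : PType L M (Fin nb)) : PType L M (Fin na ⊕ Fin nb) :=
  {x | ∀ a : Fin na → M, realizes a (restrictParams (A ∪ Set.range x.2.2) p) →
    ⟨x.1 + na,
      x.2.1.relabel (Sum.elim
        (Sum.elim (fun i : Fin na => Sum.inr (Fin.natAdd x.1 i)) Sum.inl)
        (fun j : Fin x.1 => Sum.inr (Fin.castAdd na j))),
      Fin.append x.2.2 a⟩ ∈ globExtT L A S q}

/-- A Dedekind partition with `n` cuts of a sequence with the same EM-type as `b`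
which is `m`-distal. -/
structure DistalWitness (L : FirstOrder.Language) (M : Type) [L.Structure M] {ι α : Type}
    [LinearOrder ι] (b : ι → α → M) (n m : ℕ) : Type 1 where
  κι : Type
  [inst : LinearOrder κι]
  c : κι → α → M
  part : κι → Fin (n + 1)
  same : SameEM L b c
  ded : IsDedekindPartition part
  dist : MDistalPartition L ∅ c part m

/-!
Upper bound. In the generic hypergraph the type of a tuple is determined by its equalities and
edges: the extension axioms let every partial isomorphism between finite sets be extended, so a
back-and-forth induction on formulas applies. Each such atomic formula mentions at most `n + 2`
blocks of a tuple. If every `n + 2` of the points `aᵢ` can be inserted at their cuts, then every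
subtuple of at most `n + 2` blocks of a configuration with all of them inserted has the type of an
increasing tuple of the base sequence, and hence the whole configuration has the right type.

Lower bound. The extension axioms embed every countable `(n + 2)`-uniform hypergraph into the
generic one; take the hypergraph on `ℚ`-many points `bⱼ` and `n + 2` further points `aᵢ` whose only
non-edge is `{a₀, …, a_{n+1}}`. Any `n + 1` of the `aᵢ` lie, together with the `bⱼ`, in a clique, so
they insert indiscernibly at any cuts; inserting all of them turns the edge formed by `n + 2`
points of the sequence into a non-edge.
-/

section DedekindPartition

variable {ι : Type} [LinearOrder ι]

theorem IsDedekindCut.infinite {c : Set ι} (hc : IsDedekindCut c) : Infinite ι := by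
  obtain ⟨hne, -, -, hnomax, -⟩ := hc
  by_contra hfin
  rw [not_infinite_iff_finite] at hfin
  obtain ⟨i, hi, hmax⟩ := (toFinite c).exists_maximal hne
  obtain ⟨j, hj, hij⟩ := hnomax i hi
  exact hij.not_ge (hmax hj hij.le)

theorem mem_cutSet {k : ℕ} {part : ι → Fin (k + 1)} {t : Fin k} {i : ι} :
    i ∈ cutSet part t ↔ part i ≤ t.castSucc :=
  Iff.rfl

theorem cutSet_ssubset_cutSet {k : ℕ} {part : ι → Fin (k + 1)} (hpart : ∀ t, ∃ i, part i = t)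
    {t t' : Fin k} (htt' : t < t') : cutSet part t ⊂ cutSet part t' := by
  have hlt := Fin.castSucc_lt_castSucc_iff.2 htt'
  refine ssubset_iff_subset_ne.2 ⟨fun i hi => (mem_cutSet.1 hi).trans hlt.le, fun h => ?_⟩
  obtain ⟨i, hi⟩ := hpart t'.castSucc
  have : i ∈ cutSet part t := h ▸ mem_cutSet.2 hi.le
  exact hlt.not_ge (hi ▸ mem_cutSet.1 this)

theorem isDedekindPartition_ofLex_fst {k : ℕ} {β : Type} [LinearOrder β] [Nonempty β]
    [NoMaxOrder β] [NoMinOrder β] :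
    IsDedekindPartition fun x : Lex (Fin (k + 1) × β) => (ofLex x).1 := by
  obtain ⟨b₀⟩ := ‹Nonempty β›
  have hmono : Monotone fun x : Lex (Fin (k + 1) × β) => (ofLex x).1 :=
    Prod.Lex.monotone_fst_ofLex
  refine ⟨hmono, fun t => ⟨toLex (t, b₀), rfl⟩,
    fun t => ⟨?_, ?_, ?_, fun i hi => ?_, fun i hi => ?_⟩⟩
  · exact ⟨toLex (t.castSucc, b₀), mem_cutSet.2 le_rfl⟩
  · exact ⟨toLex (Fin.last k, b₀), fun h => (Fin.castSucc_lt_last t).not_ge (mem_cutSet.1 h)⟩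
  · exact fun i hi j hji => (hmono hji).trans hi
  · obtain ⟨b, hb⟩ := exists_gt (ofLex i).2
    exact ⟨toLex ((ofLex i).1, b), hi, Prod.Lex.toLex_lt_toLex.2 (Or.inr ⟨rfl, hb⟩)⟩
  · obtain ⟨b, hb⟩ := exists_lt (ofLex i).2
    exact ⟨toLex ((ofLex i).1, b), hi, Prod.Lex.toLex_lt_toLex.2 (Or.inr ⟨rfl, hb⟩)⟩

end DedekindPartition

theorem insLT_irrefl {ι η : Type} [LinearOrder ι] [LinearOrder η] (Lc : η → Set ι)
    (x : ι ⊕ η) : ¬ insLT Lc x x := by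
  rcases x with i | e
  · exact lt_irrefl i
  · rintro (h | ⟨-, h⟩)
    · exact h.2 h.1
    · exact lt_irrefl e h

theorem injective_of_insLT {ι η : Type} [LinearOrder ι] [LinearOrder η] {Lc : η → Set ι}
    {N : ℕ} {f : Fin N → ι ⊕ η} (hf : ∀ x y, x < y → insLT Lc (f x) (f y)) :
    Function.Injective f :=
  Function.Injective.of_lt_imp_ne fun x y hxy h => insLT_irrefl Lc _ (h ▸ hf x y hxy)

def SameQFType (m : ℕ) [(hyperLang m).Structure M] {γ : Type} (u v : γ → M) : Prop :=
  (∀ i j, u i = u j ↔ v i = v j) ∧ ∀ w : Fin m → γ, Edge (u ∘ w) ↔ Edge (v ∘ w)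

namespace SameQFType

variable {m : ℕ} [(hyperLang m).Structure M] {γ δ : Type} {u v : γ → M}

theorem symm (h : SameQFType m u v) : SameQFType m v u :=
  ⟨fun i j => (h.1 i j).symm, fun w => (h.2 w).symm⟩

theorem comp (h : SameQFType m u v) (e : δ → γ) : SameQFType m (u ∘ e) (v ∘ e) :=
  ⟨fun i j => h.1 (e i) (e j), fun w => h.2 (e ∘ w)⟩

theorem injective_comp_iff (h : SameQFType m u v) (c : δ → γ) :
    Function.Injective (u ∘ c) ↔ Function.Injective (v ∘ c) :=
  ⟨fun hc _ _ hij => hc ((h.1 _ _).2 hij), fun hc _ _ hij => hc ((h.1 _ _).1 hij)⟩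

theorem range_comp_subset (h : SameQFType m u v) {c c' : δ → γ}
    (hr : range (v ∘ c) ⊆ range (v ∘ c')) : range (u ∘ c) ⊆ range (u ∘ c') := by
  rintro _ ⟨j, rfl⟩
  obtain ⟨j', hj'⟩ := hr (mem_range_self j)
  exact ⟨j', (h.1 _ _).2 hj'⟩

end SameQFType

namespace EqTp

variable {L : FirstOrder.Language} [L.Structure M] {A : Set M} {β γ : Type} {f g h : β → M}

theorem symm (hfg : EqTp L A f g) : EqTp L A g f :=
  fun k a ha φ => (hfg k a ha φ).symm

theorem trans (hfg : EqTp L A f g) (hgh : EqTp L A g h) : EqTp L A f h :=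
  fun k a ha φ => (hfg k a ha φ).trans (hgh k a ha φ)

theorem comp (hfg : EqTp L A f g) (σ : γ → β) : EqTp L A (f ∘ σ) (g ∘ σ) := fun k a ha φ => by
  simpa only [Formula.realize_relabel, Sum.elim_comp_map, Function.comp_id] using
    hfg k a ha (φ.relabel (Sum.map σ id))

theorem sameQFType {m : ℕ} [(hyperLang m).Structure M] (hfg : EqTp (hyperLang m) A f g) :
    SameQFType m f g := by
  refine ⟨fun i j => ?_, fun w => ?_⟩
  · exact hfg 0 Fin.elim0 (fun i => i.elim0)
      ((Term.var (Sum.inl i)).equal (Term.var (Sum.inl j)))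
  · exact hfg 0 Fin.elim0 (fun i => i.elim0)
      (Relations.formula (⟨rfl⟩ : (hyperLang m).Relations m) fun i => Term.var (Sum.inl (w i)))

end EqTp

theorem hyperLang_term_eq_var {m : ℕ} {γ : Type} (t : (hyperLang m).Term γ) :
    ∃ i, t = Term.var i := by
  cases t with
  | var i => exact ⟨i, rfl⟩
  | func f _ => exact Empty.elim f

section GenericHypergraph

variable {n : ℕ} [(hyperLang (n + 2)).Structure M] {γ : Type}

theorem IsGenericHypergraph.edge_comp_perm_iff (hM : IsGenericHypergraph n M)
    (v : Fin (n + 2) → M) (σ : Equiv.Perm (Fin (n + 2))) : Edge (v ∘ σ) ↔ Edge v :=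
  ⟨fun h => by simpa [Function.comp_assoc] using hM.2.1 _ σ.symm h, hM.2.1 v σ⟩

theorem IsGenericHypergraph.injective_of_edge (hM : IsGenericHypergraph n M)
    {v : Fin (n + 2) → M} (h : Edge v) : Function.Injective v :=
  hM.2.2.1 v h

theorem IsGenericHypergraph.edge_iff_of_range_eq (hM : IsGenericHypergraph n M)
    {v w : Fin (n + 2) → M} (hv : Function.Injective v) (hw : Function.Injective w)
    (hr : range v = range w) : Edge v ↔ Edge w := by
  let σ : Equiv.Perm (Fin (n + 2)) :=
    (Equiv.ofInjective w hw).trans ((Equiv.setCongr hr.symm).trans (Equiv.ofInjective v hv).symm)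
  have hσ : v ∘ σ = w := funext fun k => Equiv.apply_ofInjective_symm hv _
  rw [← hσ, hM.edge_comp_perm_iff]

theorem IsGenericHypergraph.exists_edge_iff (hM : IsGenericHypergraph n M) {I : Type} [Finite I]
    (T : I → Fin (n + 1) → M) (hT : ∀ i, Function.Injective (T i))
    (hTr : Pairwise fun i j => range (T i) ≠ range (T j)) (P : I → Prop) :
    ∃ x, ∀ i, Edge (Fin.snoc (T i) x) ↔ P i := by
  classical
  have := Fintype.ofFinite I
  let eA := (Fintype.equivFin {i // P i}).symm
  let eB := (Fintype.equivFin {i // ¬ P i}).symm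
  obtain ⟨x, hxA, hxB⟩ := hM.2.2.2 _ _ (fun k => T (eA k)) (fun k => T (eB k))
    (fun _ => hT _) (fun _ => hT _)
    (fun _ _ hkl => hTr fun h => hkl (eA.injective (Subtype.ext h)))
    (fun _ _ hkl => hTr fun h => hkl (eB.injective (Subtype.ext h)))
    (fun k l => hTr fun h => (eB l).2 (h ▸ (eA k).2))
  refine ⟨x, fun i => ?_⟩
  by_cases hi : P i
  · simpa [eA, hi] using hxA (eA.symm ⟨i, hi⟩)
  · simpa [eB, hi] using hxB (eB.symm ⟨i, hi⟩)

theorem IsGenericHypergraph.exists_extension (hM : IsGenericHypergraph n M) {F : Set M}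
    (hF : F.Finite) (E : Set M → Prop) :
    ∃ x ∉ F, ∀ w : Fin (n + 1) → M, Function.Injective w → range w ⊆ F →
      (Edge (Fin.snoc w x) ↔ E (range w)) := by
  have := hM.1
  have := hF.to_subtype
  let 𝒮 := {t : Set M | t ⊆ F ∧ t.ncard = n + 1}
  have := (hF.finite_subsets.subset fun _ ht => ht.1 : 𝒮.Finite).to_subtype
  have enum (t : 𝒮) : ∃ e : Fin (n + 1) → M, Function.Injective e ∧ range e = t := by
    have := (hF.subset t.2.1).to_subtype
    let e := Finite.equivFinOfCardEq ((Nat.card_coe_set_eq (t : Set M)).trans t.2.2)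
    refine ⟨Subtype.val ∘ e.symm, Subtype.val_injective.comp e.symm.injective, ?_⟩
    rw [range_comp, e.symm.range_eq_univ, image_univ, Subtype.range_coe]
  choose e he using enum
  -- `fresh (f, ·)` is a tuple outside `F` on which `x` is required to disagree with `f`
  obtain ⟨k, hk⟩ := exists_injective_nat (F × Fin (n + 1))
  let fresh : F × Fin (n + 1) → M := fun p => hF.infinite_compl.natEmbedding _ (k p)
  have fresh_inj : Function.Injective fresh := fun p q h =>
    hk ((hF.infinite_compl.natEmbedding _).injective (Subtype.ext h))
  have fresh_notMem (p) : fresh p ∉ F := (hF.infinite_compl.natEmbedding _ (k p)).2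
  let T : 𝒮 ⊕ F → Fin (n + 1) → M := Sum.elim e fun f i => fresh (f, i)
  have hT : ∀ i, Function.Injective (T i) := by
    rintro (t | f)
    · exact (he t).1
    · exact fun i j h => congrArg Prod.snd (fresh_inj h)
  have cross (t : 𝒮) (f : F) : range (e t) ≠ range fun i => fresh (f, i) := fun hr => by
    obtain ⟨i, hi⟩ : e t 0 ∈ range fun i => fresh (f, i) := hr ▸ mem_range_self 0
    exact fresh_notMem _ (hi ▸ t.2.1 ((he t).2 ▸ mem_range_self 0))
  have hTr : Pairwise fun i j => range (T i) ≠ range (T j) := by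
    rintro (t | f) (t' | f') hne hr
    · exact hne (congrArg Sum.inl (Subtype.ext (by simpa [T, (he _).2] using hr)))
    · exact cross t f' hr
    · exact cross t' f hr.symm
    · obtain ⟨i, hi⟩ : fresh (f, 0) ∈ range fun i => fresh (f', i) := hr ▸ mem_range_self 0
      exact hne (congrArg Sum.inr (congrArg Prod.fst (fresh_inj hi)).symm)
  obtain ⟨x, hx⟩ := hM.exists_edge_iff T hT hTr
    (Sum.elim (fun t => E t) fun f => ¬ Edge (Fin.snoc (fun i => fresh (f, i)) f))
  have hxF : x ∉ F := fun hxF => by simpa [T] using hx (Sum.inr ⟨x, hxF⟩)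
  refine ⟨x, hxF, fun w hw hwF => ?_⟩
  let t : 𝒮 := ⟨range w, hwF, by rw [ncard_range_of_injective hw, Nat.card_fin]⟩
  have hxw : x ∉ range w := fun h => hxF (hwF h)
  calc Edge (Fin.snoc w x) ↔ Edge (Fin.snoc (e t) x) :=
        hM.edge_iff_of_range_eq (Fin.snoc_injective_iff.2 ⟨hw, hxw⟩)
          (Fin.snoc_injective_iff.2 ⟨(he t).1, (he t).2 ▸ hxw⟩) (by simp [(he t).2, t])
    _ ↔ E (range w) := hx (Sum.inl t)

theorem IsGenericHypergraph.sameQFType_option (hM : IsGenericHypergraph n M) {u v : γ → M}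
    {x y : M} (h : SameQFType (n + 2) u v) (hx : x ∉ range u) (hy : y ∉ range v)
    (hedge : ∀ c : Fin (n + 1) → γ, Edge (Fin.snoc (u ∘ c) x) ↔ Edge (Fin.snoc (v ∘ c) y)) :
    SameQFType (n + 2) (fun o : Option γ => o.elim x u) (fun o => o.elim y v) := by
  refine ⟨?_, fun w => ?_⟩
  · rintro (_ | i) (_ | j)
    · simp
    · exact iff_of_false (fun hxi => hx ⟨j, hxi.symm⟩) (fun hyi => hy ⟨j, hyi.symm⟩)
    · exact iff_of_false (fun hxi => hx ⟨i, hxi⟩) (fun hyi => hy ⟨i, hyi⟩)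
    · exact h.1 i j
  by_cases hw : ∃ k, w k = none
  · obtain ⟨k, hk⟩ := hw
    -- move the new point to the last vertex
    let σ := Equiv.swap k (Fin.last (n + 1))
    rw [← hM.edge_comp_perm_iff _ σ, ← hM.edge_comp_perm_iff (_ ∘ w) σ]
    by_cases hs : ∀ j : Fin (n + 1), w (σ j.castSucc) ≠ none
    · choose c hc using fun j => Option.ne_none_iff_exists'.1 (hs j)
      have hwσ : w ∘ σ = Fin.snoc (some ∘ c) none := by
        ext1 i
        refine Fin.lastCases ?_ (fun j => ?_) i
        · simp [σ, hk]
        · simp [hc j]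
      simp only [Function.comp_assoc, hwσ, Fin.comp_snoc]
      exact hedge c
    · push Not at hs
      obtain ⟨j, hj⟩ := hs
      have hnot (U : Option γ → M) : ¬ Function.Injective ((U ∘ w) ∘ σ) := fun hinj =>
        (Fin.castSucc_lt_last j).ne (hinj (by simp [hj, σ, hk]))
      exact iff_of_false (fun he => hnot _ (hM.injective_of_edge he))
        (fun he => hnot _ (hM.injective_of_edge he))
  · push Not at hw
    choose c hc using fun k => Option.ne_none_iff_exists'.1 (hw k)
    obtain rfl : w = some ∘ c := funext hc
    exact h.2 c

theorem IsGenericHypergraph.exists_sameQFType_option (hM : IsGenericHypergraph n M) [Finite γ]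
    {u v : γ → M} (h : SameQFType (n + 2) u v) (x : M) :
    ∃ y, SameQFType (n + 2) (fun o : Option γ => o.elim x u) (fun o => o.elim y v) := by
  by_cases hx : x ∈ range u
  · obtain ⟨i, rfl⟩ := hx
    refine ⟨v i, ?_⟩
    convert h.comp fun o : Option γ => o.elim i id using 1 <;> ext (_ | _) <;> rfl
  obtain ⟨y, hy, hyE⟩ := hM.exists_extension (finite_range v)
    fun s => ∃ c : Fin (n + 1) → γ, Function.Injective (v ∘ c) ∧ range (v ∘ c) = s ∧
      Edge (Fin.snoc (u ∘ c) x)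
  refine ⟨y, hM.sameQFType_option h hx hy fun c => ?_⟩
  by_cases hc : Function.Injective (v ∘ c)
  · rw [hyE (v ∘ c) hc (range_comp_subset_range _ _)]
    refine ⟨fun he => ⟨c, hc, rfl, he⟩, fun ⟨c', hc', hr, he⟩ => ?_⟩
    have hru : range (u ∘ c') = range (u ∘ c) :=
      (h.range_comp_subset hr.subset).antisymm (h.range_comp_subset hr.symm.subset)
    refine (hM.edge_iff_of_range_eq ?_ ?_ (by rw [Fin.range_snoc, Fin.range_snoc, hru])).1 he
    · exact Fin.snoc_injective_iff.2 ⟨(h.injective_comp_iff c').2 hc', fun ⟨j, hj⟩ => hx ⟨_, hj⟩⟩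
    · exact Fin.snoc_injective_iff.2 ⟨(h.injective_comp_iff c).2 hc, fun ⟨j, hj⟩ => hx ⟨_, hj⟩⟩
  · have hnot (w : γ → M) (z : M) (hw : ¬ Function.Injective (w ∘ c)) :
        ¬ Edge (Fin.snoc (w ∘ c) z) := fun he =>
      hw (Fin.snoc_injective_iff.1 (hM.injective_of_edge he)).1
    exact iff_of_false (hnot u x ((h.injective_comp_iff c).not.2 hc)) (hnot v y hc)

theorem IsGenericHypergraph.exists_sameQFType_snoc (hM : IsGenericHypergraph n M) [Finite γ]
    {l : ℕ} {u v : γ → M} {xs ys : Fin l → M}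
    (h : SameQFType (n + 2) (Sum.elim u xs) (Sum.elim v ys)) (x : M) :
    ∃ y, SameQFType (n + 2) (Sum.elim u (Fin.snoc xs x)) (Sum.elim v (Fin.snoc ys y)) := by
  obtain ⟨y, hy⟩ := hM.exists_sameQFType_option h x
  let e : γ ⊕ Fin (l + 1) → Option (γ ⊕ Fin l) :=
    Sum.elim (fun i => some (Sum.inl i)) (Fin.snoc (fun j => some (Sum.inr j)) none)
  have he (w : γ ⊕ Fin l → M) (z : M) :
      (fun o => o.elim z w) ∘ e = Sum.elim (w ∘ Sum.inl) (Fin.snoc (w ∘ Sum.inr) z) := by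
    ext (i | j)
    · rfl
    · refine Fin.lastCases ?_ (fun j => ?_) j <;> simp [e]
  refine ⟨y, ?_⟩
  simpa only [he, Sum.elim_comp_inl, Sum.elim_comp_inr] using hy.comp e

theorem IsGenericHypergraph.realize_iff_of_sameQFType (hM : IsGenericHypergraph n M) [Finite γ]
    {l : ℕ} (φ : (hyperLang (n + 2)).BoundedFormula γ l) {u v : γ → M} {xs ys : Fin l → M}
    (h : SameQFType (n + 2) (Sum.elim u xs) (Sum.elim v ys)) :
    φ.Realize u xs ↔ φ.Realize v ys := by
  induction φ with
  | falsum => exact Iff.rfl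
  | equal t₁ t₂ =>
    obtain ⟨i₁, rfl⟩ := hyperLang_term_eq_var t₁
    obtain ⟨i₂, rfl⟩ := hyperLang_term_eq_var t₂
    exact h.1 i₁ i₂
  | @rel l k R ts =>
    obtain ⟨rfl⟩ := R
    choose c hc using fun i => hyperLang_term_eq_var (ts i)
    obtain rfl : ts = fun i => Term.var (c i) := funext hc
    exact h.2 c
  | imp φ ψ ihφ ihψ =>
    simp only [BoundedFormula.realize_imp]
    rw [ihφ h, ihψ h]
  | all φ ih =>
    simp only [BoundedFormula.realize_all]
    constructor
    · intro hall y
      obtain ⟨x, hx⟩ := hM.exists_sameQFType_snoc h.symm y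
      exact (ih hx.symm).1 (hall x)
    · intro hall x
      obtain ⟨y, hy⟩ := hM.exists_sameQFType_snoc h x
      exact (ih hy).2 (hall y)

theorem IsGenericHypergraph.eqTp_of_sameQFType (hM : IsGenericHypergraph n M) {u v : γ → M}
    (h : SameQFType (n + 2) u v) : EqTp (hyperLang (n + 2)) ∅ u v := by
  classical
  rintro (_ | k) a ha φ
  swap
  · exact absurd (ha 0) (notMem_empty _)
  -- only the finitely many free variables of `φ` matter
  have hs : ↑φ.freeVarFinset ⊆ (φ.freeVarFinset : Set (γ ⊕ Fin 0)) := subset_rfl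
  rw [Formula.Realize, Formula.Realize, ← BoundedFormula.realize_restrictFreeVar' hs,
    ← BoundedFormula.realize_restrictFreeVar' hs]
  let g : ↥(φ.freeVarFinset : Set (γ ⊕ Fin 0)) ⊕ Fin 0 → γ :=
    Sum.elim (fun i => Sum.elim id Fin.elim0 i.1) Fin.elim0
  have hg (w : γ → M) : Sum.elim (Sum.elim w a ∘ Subtype.val) default = w ∘ g := by
    ext (⟨_ | i, _⟩ | i)
    · rfl
    all_goals exact i.elim0
  have : Finite ↥(φ.freeVarFinset : Set (γ ⊕ Fin 0)) := Finset.finite_toSet _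
  exact hM.realize_iff_of_sameQFType _ (by simpa only [hg] using h.comp g)

theorem IsGenericHypergraph.eqTp_tupcat_of_forall_le (hM : IsGenericHypergraph n M) {N : ℕ}
    {α : Type} {u v : Fin N → α → M}
    (h : ∀ r (e : Fin r ↪o Fin N), r ≤ n + 2 →
      EqTp (hyperLang (n + 2)) ∅ (tupcat (u ∘ e)) (tupcat (v ∘ e))) :
    EqTp (hyperLang (n + 2)) ∅ (tupcat u) (tupcat v) := by
  classical
  have key (q : ℕ) (w : Fin q → Fin N × α) (hq : q ≤ n + 2) :
      SameQFType (n + 2) (tupcat u ∘ w) (tupcat v ∘ w) := by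
    let J := Finset.univ.image (Prod.fst ∘ w)
    let e := J.orderEmbOfFin rfl
    have hJ : J.card ≤ n + 2 := Finset.card_image_le.trans (by simpa using hq)
    have hmem (i : Fin q) : (w i).1 ∈ range e := by simp [e, J]
    choose w' hw' using hmem
    have hfac (z : Fin N → α → M) :
        tupcat z ∘ w = tupcat (z ∘ e) ∘ fun i => (w' i, (w i).2) := by
      ext i
      simp [tupcat, hw']
    rw [hfac u, hfac v]
    exact ((h _ e hJ).comp _).sameQFType
  refine hM.eqTp_of_sameQFType ⟨fun i j => ?_, fun w => (key _ w le_rfl).2 id⟩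
  simpa using (key 2 ![i, j] (by omega)).1 0 1

theorem IsGenericHypergraph.insertsInd_univ (hM : IsGenericHypergraph n M)
    {ι η α : Type} [LinearOrder ι] [Infinite ι] [LinearOrder η] [Finite η] {b : ι → α → M}
    {Lc : η → Set ι} {a : η → α → M} (hη : n + 2 ≤ Nat.card η)
    (h : ∀ S : Set η, S.ncard = n + 2 → InsertsInd (hyperLang (n + 2)) ∅ b Lc a S) :
    InsertsInd (hyperLang (n + 2)) ∅ b Lc a univ := by
  have toBase (r : ℕ) (hr : r ≤ n + 2) (p : Fin r ↪o ι) (f : Fin r → ι ⊕ η)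
      (hf : ∀ x y, x < y → insLT Lc (f x) (f y)) :
      EqTp (hyperLang (n + 2)) ∅ (tupcat fun j => Sum.elim b a (f j))
        (tupcat fun j => b (p j)) := by
    have hE : (Sum.inr ⁻¹' range f).ncard ≤ n + 2 :=
      calc _ ≤ (range f).ncard :=
            ncard_le_ncard_of_injOn Sum.inr (fun _ h => h) Sum.inr_injective.injOn
        _ = Nat.card (range f) := (Nat.card_coe_set_eq _).symm
        _ ≤ Nat.card (Fin r) := Finite.card_range_le f
        _ ≤ n + 2 := by simpa using hr
    obtain ⟨S, hES, -, hS⟩ := exists_subsuperset_card_eq (subset_univ _) hE (by simpa using hη)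
    exact h S hS r f (fun j => Sum.inl (p j)) hf (fun _ _ hxy => p.strictMono hxy)
      (fun x _ hx => hES ⟨x, hx⟩) (fun _ _ hx => by simp at hx)
  intro N f g hf hg _ _
  refine hM.eqTp_tupcat_of_forall_le fun r e hr => ?_
  obtain ⟨s, hs⟩ := Infinite.exists_subset_card_eq ι r
  let p := s.orderEmbOfFin hs
  exact (toBase r hr p (f ∘ e) fun _ _ hxy => hf _ _ (e.strictMono hxy)).trans
    (toBase r hr p (g ∘ e) fun _ _ hxy => hg _ _ (e.strictMono hxy)).symm

theorem IsGenericHypergraph.theoryMDistalOver (hM : IsGenericHypergraph n M) :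
    TheoryMDistalOver (hyperLang (n + 2)) M ∅ (n + 2) := by
  intro ι α _ b _ part hpart a ha
  have := (hpart.2.2 0).infinite
  exact hM.insertsInd_univ (by simp) ha

/-- A copy inside `M` of the `(n + 2)`-uniform hypergraph on `ℕ` with edge predicate `E`, built
point by point with `exists_extension`. -/
noncomputable def univSeq (hM : IsGenericHypergraph n M) (E : Set ℕ → Prop) : ℕ → M
  | N => (hM.exists_extension (finite_range fun k : Fin N => univSeq hM E k)
      fun s => E (insert N {k | ∃ _ : k < N, univSeq hM E k ∈ s})).choose

theorem univSeq_spec (hM : IsGenericHypergraph n M) (E : Set ℕ → Prop) (N : ℕ) :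
    univSeq hM E N ∉ range (fun k : Fin N => univSeq hM E k) ∧
      ∀ w : Fin (n + 1) → M, Function.Injective w →
        range w ⊆ range (fun k : Fin N => univSeq hM E k) →
        (Edge (Fin.snoc w (univSeq hM E N)) ↔
          E (insert N {k | ∃ _ : k < N, univSeq hM E k ∈ range w})) := by
  rw [univSeq]
  exact (hM.exists_extension (finite_range fun k : Fin N => univSeq hM E k)
    fun s => E (insert N {k | ∃ _ : k < N, univSeq hM E k ∈ s})).choose_spec

theorem univSeq_injective (hM : IsGenericHypergraph n M) (E : Set ℕ → Prop) :
    Function.Injective (univSeq hM E) :=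
  Function.Injective.of_lt_imp_ne fun a b hab h => (univSeq_spec hM E b).1 ⟨⟨a, hab⟩, h⟩

theorem edge_univSeq_snoc_iff (hM : IsGenericHypergraph n M) (E : Set ℕ → Prop) {N : ℕ}
    {w : Fin (n + 1) → ℕ} (hw : Function.Injective w) (hlt : ∀ i, w i < N) :
    Edge (Fin.snoc (univSeq hM E ∘ w) (univSeq hM E N)) ↔ E (insert N (range w)) := by
  have hP := univSeq_injective hM E
  rw [(univSeq_spec hM E N).2 _ (hP.comp hw) (by rintro _ ⟨i, rfl⟩; exact ⟨⟨w i, hlt i⟩, rfl⟩)]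
  congr! 2
  ext k
  simp only [mem_ofPred_eq, range_comp, hP.mem_set_image, mem_range]
  exact ⟨fun ⟨_, hk⟩ => hk, fun ⟨i, hi⟩ => ⟨hi ▸ hlt i, i, hi⟩⟩

theorem edge_univSeq_iff (hM : IsGenericHypergraph n M) (E : Set ℕ → Prop)
    {w : Fin (n + 2) → ℕ} (hw : Function.Injective w) :
    Edge (univSeq hM E ∘ w) ↔ E (range w) := by
  -- sort `w`, so that its last entry is the largest
  set σ := Tuple.sort w
  have hmono : StrictMono (w ∘ σ) :=
    (Tuple.monotone_sort w).strictMono_of_injective (hw.comp σ.injective)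
  rw [← hM.edge_comp_perm_iff _ σ, Function.comp_assoc, ← σ.surjective.range_comp w,
    ← Fin.snoc_init_self (w ∘ σ), Fin.range_snoc, Fin.comp_snoc]
  exact edge_univSeq_snoc_iff hM E (hmono.injective.comp (Fin.castSucc_injective _))
    fun i => hmono (Fin.castSucc_lt_last i)

theorem IsGenericHypergraph.exists_embedding (hM : IsGenericHypergraph n M) {κ : Type}
    [Countable κ] (E : Set κ → Prop) :
    ∃ Q : κ → M, Function.Injective Q ∧
      ∀ w : Fin (n + 2) → κ, Function.Injective w → (Edge (Q ∘ w) ↔ E (range w)) := by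
  obtain ⟨e, he⟩ := exists_injective_nat κ
  let E' : Set ℕ → Prop := fun s => E (e ⁻¹' s)
  refine ⟨univSeq hM E' ∘ e, (univSeq_injective hM E').comp he, fun w hw => ?_⟩
  rw [Function.comp_assoc, edge_univSeq_iff hM E' (he.comp hw), range_comp]
  exact iff_of_eq (congrArg E (he.preimage_image _))

theorem IsGenericHypergraph.eqTp_comp_of_clique (hM : IsGenericHypergraph n M) {κ β : Type}
    {Q : κ → M} (hQ : Function.Injective Q) {K : Set κ}
    (hK : ∀ w : Fin (n + 2) → κ, Function.Injective w → range w ⊆ K → Edge (Q ∘ w))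
    {u v : β → κ} (hu : range u ⊆ K) (hv : range v ⊆ K) (huv : ∀ i j, u i = u j ↔ v i = v j) :
    EqTp (hyperLang (n + 2)) ∅ (Q ∘ u) (Q ∘ v) := by
  have hedge {z : β → κ} (hz : range z ⊆ K) (w : Fin (n + 2) → β) :
      Edge ((Q ∘ z) ∘ w) ↔ Function.Injective (z ∘ w) :=
    ⟨fun he => Function.Injective.of_comp (f := Q) (hM.injective_of_edge he),
      fun hzw => hK _ hzw ((range_comp_subset_range w z).trans hz)⟩
  refine hM.eqTp_of_sameQFType ⟨fun i j => ?_, fun w => ?_⟩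
  · exact hQ.eq_iff.trans ((huv i j).trans hQ.eq_iff.symm)
  · rw [hedge hu, hedge hv]
    exact ⟨fun h i j hij => h ((huv _ _).2 hij), fun h i j hij => h ((huv _ _).1 hij)⟩

theorem IsGenericHypergraph.not_theoryMDistalOver (hM : IsGenericHypergraph n M) :
    ¬ TheoryMDistalOver (hyperLang (n + 2)) M ∅ (n + 1) := by
  intro H
  let ι := Lex (Fin (n + 3) × ℚ)
  have : Countable ι := inferInstanceAs (Countable (Fin (n + 3) × ℚ))
  -- the inserted points `Sum.inr e` form the only non-edge
  obtain ⟨Q, hQ, hQE⟩ := hM.exists_embedding (κ := ι ⊕ Fin (n + 2)) (· ≠ range Sum.inr)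
  let F : ι ⊕ Fin (n + 2) → Fin 1 → M := fun x _ => Q x
  have key (S : Set (Fin (n + 2))) (hS : S ≠ univ) {N : ℕ} {f g : Fin N → ι ⊕ Fin (n + 2)}
      (hf : Function.Injective f) (hg : Function.Injective g)
      (hfS : ∀ x e, f x = Sum.inr e → e ∈ S) (hgS : ∀ x e, g x = Sum.inr e → e ∈ S) :
      EqTp (hyperLang (n + 2)) ∅ (tupcat fun j => F (f j)) (tupcat fun j => F (g j)) := by
    let K : Set (ι ⊕ Fin (n + 2)) := range Sum.inl ∪ Sum.inr '' S
    have hK : ¬ range Sum.inr ⊆ K := fun h =>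
      hS (eq_univ_of_forall fun e => by simpa [K] using h ⟨e, rfl⟩)
    have hsub {h : Fin N → ι ⊕ Fin (n + 2)} (hh : ∀ x e, h x = Sum.inr e → e ∈ S) :
        range (h ∘ Prod.fst : Fin N × Fin 1 → _) ⊆ K := by
      rintro _ ⟨x, rfl⟩
      rcases hx : h x.1 with i | e
      · exact Or.inl ⟨i, hx.symm⟩
      · exact Or.inr ⟨e, hh _ _ hx, hx.symm⟩
    exact hM.eqTp_comp_of_clique hQ (fun w hw hwK => (hQE w hw).2 fun h => hK (h ▸ hwK))
      (hsub hfS) (hsub hgS) fun i j => hf.eq_iff.trans hg.eq_iff.symm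
  let part : ι → Fin (n + 3) := fun x => (ofLex x).1
  have hpart : IsDedekindPartition part := isDedekindPartition_ofLex_fst
  have hind : indiscOver (hyperLang (n + 2)) ∅ (F ∘ Sum.inl) := fun N f g hf hg =>
    key ∅ empty_ne_univ (Sum.inl_injective.comp hf.injective)
      (Sum.inl_injective.comp hg.injective) (by simp) (by simp)
  have hins (S : Set (Fin (n + 2))) (hS : S.ncard = n + 1) :
      InsertsInd (hyperLang (n + 2)) ∅ (F ∘ Sum.inl) (cutSet part) (F ∘ Sum.inr) S := by
    intro N f g hf hg hfS hgS
    rw [Sum.elim_comp_inl_inr]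
    refine key S (fun h => ?_) (injective_of_insLT hf) (injective_of_insLT hg) hfS hgS
    simp [h] at hS
  let c : Fin (n + 2) → ι := fun j => toLex (0, (j : ℚ))
  have hc : StrictMono c := fun _ _ hxy =>
    Prod.Lex.toLex_lt_toLex.2 (Or.inr ⟨rfl, by dsimp only; exact_mod_cast hxy⟩)
  have hall := H ι (Fin 1) _ hind part hpart _ hins (n + 2) Sum.inr (Sum.inl ∘ c)
    (fun _ _ hxy => Or.inl (cutSet_ssubset_cutSet hpart.2.1 hxy)) (fun _ _ hxy => hc hxy)
    (by simp) (by simp)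
  have hedge : Edge (Q ∘ Sum.inr) ↔ Edge (Q ∘ Sum.inl ∘ c) := hall.sameQFType.2 fun i => (i, 0)
  have hnot : ¬ Edge (Q ∘ Sum.inr) := fun h => (hQE _ Sum.inr_injective).1 h rfl
  refine hnot (hedge.2 ((hQE _ (Sum.inl_injective.comp hc.injective)).2 fun h => ?_))
  obtain ⟨j, hj⟩ : Sum.inr 0 ∈ range (Sum.inl ∘ c) := h.symm ▸ mem_range_self 0
  exact Sum.inl_ne_inr hj

end GenericHypergraph

theorem stmt17_general (n : ℕ) (M : Type) [S : (hyperLang (n + 2)).Structure M]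
    (hM : IsGenericHypergraph n M) :
    TheoryMDistalOver (hyperLang (n + 2)) M ∅ (n + 2) ∧
      ¬ TheoryMDistalOver (hyperLang (n + 2)) M ∅ (n + 1) :=
  ⟨hM.theoryMDistalOver, hM.not_theoryMDistalOver⟩

/-- the theory of the generic `(n+2)`-uniform hypergraph has distality rank
exactly `n + 2`. -/
theorem stmt17 (n : ℕ) (M : Type) [S : (hyperLang (n + 2)).Structure M]
    (hM : IsGenericHypergraph n M) (hmon : IsMonster (hyperLang (n + 2)) M) :
    TheoryMDistalOver (hyperLang (n + 2)) M ∅ (n + 2) ∧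
      ¬ TheoryMDistalOver (hyperLang (n + 2)) M ∅ (n + 1) :=
  stmt17_general n M (S := S) hM

end DR
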